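/- Let ξ ∈ ℝ, let Q and H be real symmetric traceless 3×3 matrices and let B be a real 3×3 matrix with tr B = 0. Set D = (B+Bᵀ)/2, W = (B−Bᵀ)/2 and S(B,Q) := (ξD+W)(Q + I/3) + (Q + I/3)(ξD−W) − 2ξ(Q + I/3)·tr(QB). Define σ̂(Q,H) := QH − HQ and τ̂(Q,H) := −ξ( (2/3)H + QH + HQ − 2(Q + I/3)·tr(QH) ). Then Σ_{i,j} S(B,Q)_{ij} H_{ij} = − Σ_{i,j} B_{ij} (τ̂(Q,H) + σ̂(Q,H))_{ij}. (This is the pointwise cancellation between the stretching-rotation term tested against H and the velocity gradient tested against the non-Newtonian stresses, used in the proof that the total energy is non-increasing.) -/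
import Mathlib


open Matrix

/-- The stretching-rotation term `S(B,Q) := (ξD+W)(Q+I/3) + (Q+I/3)(ξD−W) − 2ξ(Q+I/3)·tr(QB)`,
with `D = (B+Bᵀ)/2` and `W = (B−Bᵀ)/2`. -/
noncomputable def Sterm (ξ : ℝ) (B Q : Matrix (Fin 3) (Fin 3) ℝ) : Matrix (Fin 3) (Fin 3) ℝ :=
  (ξ • ((2 : ℝ)⁻¹ • (B + Bᵀ)) + (2 : ℝ)⁻¹ • (B - Bᵀ)) * (Q + (3 : ℝ)⁻¹ • 1)
    + (Q + (3 : ℝ)⁻¹ • 1) * (ξ • ((2 : ℝ)⁻¹ • (B + Bᵀ)) - (2 : ℝ)⁻¹ • (B - Bᵀ))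
    - (2 * ξ * Matrix.trace (Q * B)) • (Q + (3 : ℝ)⁻¹ • (1 : Matrix (Fin 3) (Fin 3) ℝ))

/-- The antisymmetric stress `σ̂(Q,H) := QH − HQ`. -/
def sigmaHat (Q H : Matrix (Fin 3) (Fin 3) ℝ) : Matrix (Fin 3) (Fin 3) ℝ :=
  Q * H - H * Q

/-- The highest-order symmetric stress
`τ̂(Q,H) := −ξ((2/3)H + QH + HQ − 2(Q+I/3)·tr(QH))`. -/
noncomputable def tauHat (ξ : ℝ) (Q H : Matrix (Fin 3) (Fin 3) ℝ) : Matrix (Fin 3) (Fin 3) ℝ :=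
  (-ξ) • (((2 : ℝ) / 3) • H + Q * H + H * Q
    - (2 * Matrix.trace (Q * H)) • (Q + (3 : ℝ)⁻¹ • (1 : Matrix (Fin 3) (Fin 3) ℝ)))

set_option maxHeartbeats 4000000 in
/-- For `ξ ∈ ℝ`, real symmetric traceless 3×3 matrices `Q`, `H` and a real traceless 3×3
matrix `B`, the Frobenius pairing satisfies
`Σ_{i,j} S(B,Q)_{ij} H_{ij} = − Σ_{i,j} B_{ij} (τ̂(Q,H) + σ̂(Q,H))_{ij}`. -/
theorem Sterm_frobenius_pairing (ξ : ℝ) (Q H : Matrix (Fin 3) (Fin 3) ℝ)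
    (hQsymm : Qᵀ = Q) (hQtr : Matrix.trace Q = 0)
    (hHsymm : Hᵀ = H) (hHtr : Matrix.trace H = 0)
    (B : Matrix (Fin 3) (Fin 3) ℝ) (hBtr : Matrix.trace B = 0) :
    ∑ i, ∑ j, Sterm ξ B Q i j * H i j
      = -∑ i, ∑ j, B i j * (tauHat ξ Q H + sigmaHat Q H) i j := by
  have hQ10 : Q 1 0 = Q 0 1 := by have := congrFun (congrFun hQsymm 0) 1; rwa [Matrix.transpose_apply] at this
  have hQ20 : Q 2 0 = Q 0 2 := by have := congrFun (congrFun hQsymm 0) 2; rwa [Matrix.transpose_apply] at this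
  have hQ21 : Q 2 1 = Q 1 2 := by have := congrFun (congrFun hQsymm 1) 2; rwa [Matrix.transpose_apply] at this
  have hH10 : H 1 0 = H 0 1 := by have := congrFun (congrFun hHsymm 0) 1; rwa [Matrix.transpose_apply] at this
  have hH20 : H 2 0 = H 0 2 := by have := congrFun (congrFun hHsymm 0) 2; rwa [Matrix.transpose_apply] at this
  have hH21 : H 2 1 = H 1 2 := by have := congrFun (congrFun hHsymm 1) 2; rwa [Matrix.transpose_apply] at this
  rw [Matrix.trace_fin_three] at hQtr hHtr hBtr
  have hQ22 : Q 2 2 = -(Q 0 0 + Q 1 1) := by linarith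
  have hH22 : H 2 2 = -(H 0 0 + H 1 1) := by linarith
  have hB22 : B 2 2 = -(B 0 0 + B 1 1) := by linarith
  simp only [Sterm, tauHat, sigmaHat, Fin.sum_univ_three, Matrix.add_apply,
    Matrix.sub_apply, Matrix.smul_apply, Matrix.mul_apply, Matrix.one_apply,
    Matrix.transpose_apply, Matrix.trace_fin_three, Matrix.neg_apply, smul_eq_mul,
    Fin.sum_univ_succ, Fin.sum_univ_zero]
  norm_num [Fin.ext_iff]
  rw [hQ10, hQ20, hQ21, hH10, hH20, hH21, hQ22, hH22, hB22]
  ring
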